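/- arXiv:2502.07305 — 5 statements merged into one kernel-verified Lean document; each statement's English description precedes it below -/
import Mathlib

section
/- Let R be a ring such that every prime factor ring R/P embeds in a ring in which every right strongly π-regular element is strongly π-regular. Then every right strongly π-regular element of R is strongly π-regular. -/
/-!
Suppose `a` is right strongly π-regular but not left π-regular. By Zorn's lemma there is a
two-sided ideal `P` maximal among those modulo which `a` is still not left π-regular. Such a `P`
is prime: if `I J ⊆ P` with `I, J ⊄ P`, then `a` is left π-regular modulo `P + I` and `P + J`,
and multiplying the two relations produces one modulo `P + IJ = P`. Now the image of `a` in
`R/P` embeds in a ring where it is strongly π-regular, and from `t^N = t^(N+1) u` and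
`t^N = v t^(N+1)` one gets `t^N = (t^N u^(N+1)) t^(N+1)`. Since `u` is the image of an element
of `R`, this relation pulls back along the injective map, so `a` is left π-regular modulo `P`.
-/

section Monoid

variable {M : Type*} [Monoid M] {t u v : M}

def IsLeftPiRegular (t : M) : Prop :=
  ∃ (m : ℕ) (y : M), 0 < m ∧ t ^ m = y * t ^ (m + 1)

theorem pow_eq_pow_succ_mul_of_le {n N : ℕ} (h : t ^ n = t ^ (n + 1) * u) (hN : n ≤ N) :
    t ^ N = t ^ (N + 1) * u := by
  induction N, hN using Nat.le_induction with
  | base => exact h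
  | succ N _ ih => rw [pow_succ' t N, ih, ← mul_assoc, ← pow_succ']

theorem pow_eq_mul_pow_succ_of_le {n N : ℕ} (h : t ^ n = v * t ^ (n + 1)) (hN : n ≤ N) :
    t ^ N = v * t ^ (N + 1) := by
  induction N, hN using Nat.le_induction with
  | base => exact h
  | succ N _ ih => rw [pow_succ t N, ih, mul_assoc, ← pow_succ]

theorem pow_eq_pow_mul_pow_mul_pow_succ {N : ℕ} (hu : t ^ N = t ^ (N + 1) * u)
    (hv : t ^ N = v * t ^ (N + 1)) : t ^ N = t ^ N * u ^ (N + 1) * t ^ (N + 1) := by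
  have hsemi : SemiconjBy (t ^ N) u v := by
    calc t ^ N * u = v * t ^ (N + 1) * u := by conv_lhs => rw [hv]
      _ = v * t ^ N := by rw [mul_assoc, ← hu]
  have hv' : v * t ^ N * t = t ^ N := by rw [mul_assoc, ← pow_succ, ← hv]
  have hiter : ∀ k : ℕ, t ^ N = v ^ k * t ^ N * t ^ k := by
    intro k
    induction k with
    | zero => simp
    | succ k ih =>
      calc t ^ N = v ^ k * t ^ N * t ^ k := ih
        _ = v ^ k * (v * t ^ N * t) * t ^ k := by rw [hv']
        _ = v ^ (k + 1) * t ^ N * t ^ (k + 1) := by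
          rw [pow_succ v, pow_succ' t k]; simp only [mul_assoc]
  rw [(hsemi.pow_right (N + 1)).eq]
  exact hiter (N + 1)

end Monoid

section Ring

variable {R : Type*} [Ring R]

def IsLeftPiRegularMod (P : TwoSidedIdeal R) (a : R) : Prop :=
  ∃ (m : ℕ) (y : R), 0 < m ∧ a ^ m - y * a ^ (m + 1) ∈ P

theorem isLeftPiRegularMod_bot_iff {a : R} : IsLeftPiRegularMod ⊥ a ↔ IsLeftPiRegular a := by
  simp only [IsLeftPiRegularMod, IsLeftPiRegular, TwoSidedIdeal.mem_bot, sub_eq_zero]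

theorem pow_sub_pow_mul_pow_add_mem {K : TwoSidedIdeal R} {a y : R} {m : ℕ}
    (h : a ^ m - y * a ^ (m + 1) ∈ K) (k : ℕ) : a ^ m - y ^ k * a ^ (m + k) ∈ K := by
  induction k with
  | zero => simp
  | succ k ih =>
    have htel : a ^ m - y ^ (k + 1) * a ^ (m + (k + 1)) =
        (a ^ m - y ^ k * a ^ (m + k)) + y ^ k * (a ^ m - y * a ^ (m + 1)) * a ^ k := by
      rw [show m + (k + 1) = m + 1 + k by omega, pow_add a (m + 1) k, pow_add a m k, pow_succ y]
      noncomm_ring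
    rw [htel]
    exact K.add_mem ih (K.mul_mem_right _ _ (K.mul_mem_left _ _ h))

theorem pow_add_sub_mul_pow_succ_eq_mul (a y z : R) (m m' : ℕ) :
    a ^ (m + m') - (y + (a ^ m - y * a ^ (m + 1)) * z) * a ^ (m + m' + 1) =
      (a ^ m - y * a ^ (m + 1)) * (a ^ m' - z * a ^ (m' + (m + 1))) := by
  rw [show m + m' + 1 = m + 1 + m' by omega, add_comm m' (m + 1), pow_add a m m',
    pow_add a (m + 1) m']
  noncomm_ring

theorem IsLeftPiRegularMod.of_sup_of_sup {P I J : TwoSidedIdeal R} {a : R}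
    (hIJ : ∀ i ∈ I, ∀ j ∈ J, i * j ∈ P) (hI : IsLeftPiRegularMod (P ⊔ I) a)
    (hJ : IsLeftPiRegularMod (P ⊔ J) a) : IsLeftPiRegularMod P a := by
  obtain ⟨m, y, hm, hmI⟩ := hI
  obtain ⟨m', z, -, hmJ⟩ := hJ
  obtain ⟨p, hp, i, hi, hpi⟩ := TwoSidedIdeal.mem_sup.mp hmI
  obtain ⟨q, hq, j, hj, hqj⟩ := TwoSidedIdeal.mem_sup.mp (pow_sub_pow_mul_pow_add_mem hmJ (m + 1))
  refine ⟨m + m', y + (a ^ m - y * a ^ (m + 1)) * z ^ (m + 1), by omega, ?_⟩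
  rw [pow_add_sub_mul_pow_succ_eq_mul, ← hpi, ← hqj, add_mul, mul_add i]
  exact P.add_mem (P.mul_mem_right _ _ hp) (P.add_mem (P.mul_mem_left _ _ hq) (hIJ i hi j hj))

theorem TwoSidedIdeal.mem_sSup_of_directedOn {c : Set (TwoSidedIdeal R)} (hne : c.Nonempty)
    (hc : DirectedOn (· ≤ ·) c) {x : R} : x ∈ sSup c ↔ ∃ I ∈ c, x ∈ I := by
  refine ⟨fun hx => ?_, fun ⟨I, hI, hx⟩ => le_sSup hI hx⟩
  let U : TwoSidedIdeal R := .mk' {x | ∃ I ∈ c, x ∈ I}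
    (let ⟨I, hI⟩ := hne; ⟨I, hI, I.zero_mem⟩)
    (by
      rintro _ _ ⟨I, hI, hx⟩ ⟨J, hJ, hy⟩
      obtain ⟨K, hK, hIK, hJK⟩ := hc I hI J hJ
      exact ⟨K, hK, K.add_mem (hIK hx) (hJK hy)⟩)
    (by rintro _ ⟨I, hI, hx⟩; exact ⟨I, hI, I.neg_mem hx⟩)
    (by rintro _ _ ⟨I, hI, hx⟩; exact ⟨I, hI, I.mul_mem_left _ _ hx⟩)
    (by rintro _ _ ⟨I, hI, hx⟩; exact ⟨I, hI, I.mul_mem_right _ _ hx⟩)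
  have hU : sSup c ≤ U := sSup_le fun I hI _ hx => (mem_mk' _ _ _ _ _ _ _).mpr ⟨I, hI, hx⟩
  simpa only [U, mem_mk', Set.mem_ofPred_eq] using hU hx

theorem exists_maximal_not_isLeftPiRegularMod {a : R} (ha : ¬ IsLeftPiRegular a) :
    ∃ P : TwoSidedIdeal R, Maximal (fun P => ¬ IsLeftPiRegularMod P a) P := by
  have hchain : ∀ c ⊆ {P | ¬ IsLeftPiRegularMod P a}, IsChain (· ≤ ·) c → ∀ I ∈ c,
      ∃ ub ∈ {P | ¬ IsLeftPiRegularMod P a}, ∀ J ∈ c, J ≤ ub := by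
    refine fun c hcS hc I hI => ⟨sSup c, ?_, fun _ => le_sSup⟩
    rintro ⟨m, y, hm, hmem⟩
    obtain ⟨J, hJ, hJmem⟩ :=
      (TwoSidedIdeal.mem_sSup_of_directedOn ⟨I, hI⟩ hc.directedOn).mp hmem
    exact hcS hJ ⟨m, y, hm, hJmem⟩
  obtain ⟨P, -, hP⟩ :=
    zorn_le_nonempty₀ _ hchain ⊥ (isLeftPiRegularMod_bot_iff.not.mpr ha)
  exact ⟨P, hP⟩

theorem prime_of_maximal_not_isLeftPiRegularMod {P : TwoSidedIdeal R} {a : R}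
    (hP : Maximal (fun P => ¬ IsLeftPiRegularMod P a) P) (I J : TwoSidedIdeal R)
    (hIJ : ∀ i ∈ I, ∀ j ∈ J, i * j ∈ P) : I ≤ P ∨ J ≤ P := by
  by_contra! hne
  have regular_sup {K : TwoSidedIdeal R} (hK : ¬ K ≤ P) : IsLeftPiRegularMod (P ⊔ K) a := by
    by_contra h
    exact hK (le_sup_right.trans (hP.2 h le_sup_left))
  exact hP.1 (.of_sup_of_sup hIJ (regular_sup hne.1) (regular_sup hne.2))

theorem isLeftPiRegularMod_of_isLeftPiRegular_map {T : Type*} [Ring T] (g : R →+* T)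
    {P : TwoSidedIdeal R} (hg : TwoSidedIdeal.ker g ≤ P) {a x : R} {n : ℕ}
    (hx : g a ^ n = g a ^ (n + 1) * g x) (hga : IsLeftPiRegular (g a)) :
    IsLeftPiRegularMod P a := by
  obtain ⟨m, v, hm, hv⟩ := hga
  have hxN := pow_eq_pow_succ_mul_of_le hx (le_max_left n m)
  have hvN := pow_eq_mul_pow_succ_of_le hv (le_max_right n m)
  refine ⟨max n m, a ^ max n m * x ^ (max n m + 1), lt_max_of_lt_right hm, hg ?_⟩
  rw [TwoSidedIdeal.mem_ker, map_sub, sub_eq_zero]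
  simpa only [map_mul, map_pow] using pow_eq_pow_mul_pow_mul_pow_succ hxN hvN

end Ring

/-- If every prime factor ring of `R` embeds in a ring in which every right
strongly π-regular element is strongly π-regular, then every right strongly
π-regular element of `R` is strongly π-regular. -/
theorem stmt_4 {R : Type u} [Ring R]
    (h : ∀ P : TwoSidedIdeal R, P ≠ ⊤ →
      (∀ I J : TwoSidedIdeal R, (∀ i ∈ I, ∀ j ∈ J, i * j ∈ P) → I ≤ P ∨ J ≤ P) →
      ∃ (T : Type u) (_ : Ring T) (f : P.ringCon.Quotient →+* T),
        Function.Injective f ∧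
        ∀ t : T, (∃ (n : ℕ) (x : T), 0 < n ∧ t ^ n = t ^ (n + 1) * x) →
          ∃ (m : ℕ) (y : T), 0 < m ∧ t ^ m = y * t ^ (m + 1))
    (a : R) (ha : ∃ (n : ℕ) (x : R), 0 < n ∧ a ^ n = a ^ (n + 1) * x) :
    ∃ (n m : ℕ) (x y : R), 0 < n ∧ 0 < m ∧
      a ^ n = a ^ (n + 1) * x ∧ a ^ m = y * a ^ (m + 1) := by
  obtain ⟨n, x, hn, hx⟩ := ha
  suffices hreg : IsLeftPiRegular a by
    obtain ⟨m, y, hm, hy⟩ := hreg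
    exact ⟨n, m, x, y, hn, hm, hx, hy⟩
  by_contra hreg
  obtain ⟨P, hP⟩ := exists_maximal_not_isLeftPiRegularMod hreg
  have hPtop : P ≠ ⊤ := by
    rintro rfl
    exact hP.1 ⟨1, 0, one_pos, trivial⟩
  obtain ⟨T, _, f, hf, hT⟩ := h P hPtop (prime_of_maximal_not_isLeftPiRegularMod hP)
  let g := f.comp P.ringCon.mk'
  have hker : TwoSidedIdeal.ker g ≤ P := fun r hr => by
    rw [TwoSidedIdeal.mem_ker] at hr
    rw [← TwoSidedIdeal.ker_ringCon_mk' P, TwoSidedIdeal.mem_ker]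
    exact hf (hr.trans (map_zero f).symm)
  have hgx : g a ^ n = g a ^ (n + 1) * g x := by
    simpa only [map_pow, map_mul] using congrArg g hx
  exact hP.1 (isLeftPiRegularMod_of_isLeftPiRegular_map g hker hgx (hT (g a) ⟨n, g x, hn, hgx⟩))
end

section
/- In a strongly 2-primal ring (a ring in which every prime ideal is completely prime), every right strongly π-regular element is strongly π-regular. -/
/-!
Every non-nilpotent element avoids some prime ideal (Zorn), so in a strongly 2-primal ring an
element killed by every homomorphism into a ring without zero divisors is nilpotent. In such a
ring `D`, `a ^ n = a ^ (n + 1) * x` forces `a = 0` or `x = a⁻¹`; hence `e = a x` is idempotent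
modulo nilpotents and lifts to an idempotent `E` with `a ^ n * E = a ^ n`, which is `0` where
`a` is `0` and `1` where `a` is invertible. Then `E - x ^ (n + 1) * a ^ (n + 1)` is nilpotent,
and a geometric series gives `W * a ^ (n + 1) = E`, so `a ^ n = (a ^ n * W) * a ^ (n + 1)`.
-/

universe u

namespace TwoSidedIdeal

variable {R : Type*} [Ring R]

/-- Prime in the noncommutative sense, which is weaker than complete primality. -/
def IsPrime (P : TwoSidedIdeal R) : Prop :=
  P ≠ ⊤ ∧ ∀ I J : TwoSidedIdeal R, (∀ i ∈ I, ∀ j ∈ J, i * j ∈ P) → I ≤ P ∨ J ≤ P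

theorem mem_sSup_of_directed {S : Set (TwoSidedIdeal R)} (hS : S.Nonempty)
    (hdir : DirectedOn (· ≤ ·) S) {x : R} : x ∈ sSup S ↔ ∃ I ∈ S, x ∈ I := by
  refine ⟨fun hx => ?_, fun ⟨I, hI, hx⟩ => le_sSup hI hx⟩
  obtain ⟨I₀, hI₀⟩ := hS
  let U : TwoSidedIdeal R := .mk' (⋃ I ∈ S, (I : Set R))
    (Set.mem_biUnion hI₀ I₀.zero_mem)
    (by
      simp only [Set.mem_iUnion, SetLike.mem_coe]
      rintro _ _ ⟨I, hI, hx⟩ ⟨J, hJ, hy⟩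
      obtain ⟨K, hK, hIK, hJK⟩ := hdir I hI J hJ
      exact ⟨K, hK, K.add_mem (hIK hx) (hJK hy)⟩)
    (by
      simp only [Set.mem_iUnion, SetLike.mem_coe]
      rintro _ ⟨I, hI, hx⟩
      exact ⟨I, hI, I.neg_mem hx⟩)
    (by
      simp only [Set.mem_iUnion, SetLike.mem_coe]
      rintro r _ ⟨I, hI, hx⟩
      exact ⟨I, hI, I.mul_mem_left r _ hx⟩)
    (by
      simp only [Set.mem_iUnion, SetLike.mem_coe]
      rintro _ r ⟨I, hI, hx⟩
      exact ⟨I, hI, I.mul_mem_right _ r hx⟩)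
  have hU : sSup S ≤ U := sSup_le fun I hI y hy => by
    rw [mem_mk']
    exact Set.mem_biUnion hI hy
  simpa [U] using hU hx

/-- An ideal maximal among those containing no power of `z` is prime. -/
theorem exists_isPrime_notMem_of_not_isNilpotent {z : R} (hz : ¬IsNilpotent z) :
    ∃ P : TwoSidedIdeal R, P.IsPrime ∧ z ∉ P := by
  set S : Set (TwoSidedIdeal R) := {I | ∀ k, z ^ (k + 1) ∉ I}
  have hbot : ⊥ ∈ S := fun k hk => hz ⟨k + 1, (mem_bot R).mp hk⟩
  obtain ⟨P, -, hPmax⟩ := zorn_le_nonempty₀ S (fun c hcS hc I hI =>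
    ⟨sSup c, fun k hk => by
      obtain ⟨J, hJ, hk⟩ := (mem_sSup_of_directed ⟨I, hI⟩ hc.directedOn).mp hk
      exact hcS hJ k hk, fun J hJ => le_sSup hJ⟩) ⊥ hbot
  have hzP : z ∉ P := fun h => hPmax.prop 0 (by rwa [zero_add, pow_one])
  refine ⟨P, ⟨fun h => hzP (h ▸ mem_top R), fun I J hIJ => ?_⟩, hzP⟩
  have hpow : ∀ K : TwoSidedIdeal R, ¬K ≤ P → ∃ k, ∃ p ∈ P, ∃ i ∈ K, p + i = z ^ (k + 1) := by
    intro K hK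
    have hnotS : P ⊔ K ∉ S := fun h => hK (le_sup_right.trans (hPmax.le_of_ge h le_sup_left))
    simpa only [S, Set.mem_ofPred_eq, not_forall, not_not, mem_sup] using hnotS
  by_contra! hne
  obtain ⟨k, p, hp, i, hi, hk⟩ := hpow I hne.1
  obtain ⟨l, q, hq, j, hj, hl⟩ := hpow J hne.2
  apply hPmax.prop (k + l + 1)
  have hprod : z ^ (k + l + 1 + 1) = p * (q + j) + i * q + i * j := by
    rw [show k + l + 1 + 1 = (k + 1) + (l + 1) by omega, pow_add, ← hk, ← hl]
    noncomm_ring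
  rw [hprod]
  exact P.add_mem (P.add_mem (P.mul_mem_right _ _ hp) (P.mul_mem_left _ _ hq)) (hIJ i hi j hj)

theorem mk'_eq_zero_iff {P : TwoSidedIdeal R} {a : R} : P.ringCon.mk' a = 0 ↔ a ∈ P := by
  conv_rhs => rw [← ker_ringCon_mk' P]
  rw [mem_ker]

theorem noZeroDivisors_quotient {P : TwoSidedIdeal R}
    (hP : ∀ a b : R, a * b ∈ P → a ∈ P ∨ b ∈ P) : NoZeroDivisors P.ringCon.Quotient := by
  refine ⟨fun {a b} hab => ?_⟩
  obtain ⟨a, rfl⟩ := P.ringCon.mk'_surjective a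
  obtain ⟨b, rfl⟩ := P.ringCon.mk'_surjective b
  rw [← map_mul, mk'_eq_zero_iff] at hab
  simpa only [mk'_eq_zero_iff] using hP a b hab

end TwoSidedIdeal

theorem isNilpotent_of_forall_ringHom_eq_zero {R : Type u} [Ring R]
    (h2primal : ∀ P : TwoSidedIdeal R, P.IsPrime → ∀ a b : R, a * b ∈ P → a ∈ P ∨ b ∈ P)
    {z : R} (hz : ∀ (D : Type u) [Ring D] [NoZeroDivisors D] (f : R →+* D), f z = 0) :
    IsNilpotent z := by
  by_contra h
  obtain ⟨P, hP, hzP⟩ := TwoSidedIdeal.exists_isPrime_notMem_of_not_isNilpotent h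
  have := TwoSidedIdeal.noZeroDivisors_quotient (h2primal P hP)
  exact hzP (TwoSidedIdeal.mk'_eq_zero_iff.mp (hz _ P.ringCon.mk'))

theorem eq_zero_or_mul_eq_one_of_pow_eq_pow_succ_mul {D : Type*} [Ring D] [NoZeroDivisors D]
    {a x : D} {n : ℕ} (h : a ^ n = a ^ (n + 1) * x) : a = 0 ∨ a * x = 1 ∧ x * a = 1 := by
  have h₁ : a ^ n * (1 - a * x) = 0 := by
    rw [mul_sub, mul_one, ← mul_assoc, ← pow_succ, ← h, sub_self]
  rcases mul_eq_zero.mp h₁ with ha | hax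
  · exact .inl (eq_zero_of_pow_eq_zero ha)
  have hax : a * x = 1 := (sub_eq_zero.mp hax).symm
  have h₂ : a * (1 - x * a) = 0 := by
    rw [mul_sub, mul_one, ← mul_assoc, hax, one_mul, sub_self]
  rcases mul_eq_zero.mp h₂ with ha | hxa
  · exact .inl ha
  · exact .inr ⟨hax, (sub_eq_zero.mp hxa).symm⟩

section Ring

variable {R : Type*} [Ring R]

theorem pow_mul_mul_eq_of_pow_eq_pow_succ_mul {a x : R} {n ℓ : ℕ}
    (h : a ^ n = a ^ (n + 1) * x) (hℓ : n ≤ ℓ) : a ^ ℓ * (a * x) = a ^ ℓ := by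
  obtain ⟨j, rfl⟩ := Nat.exists_eq_add_of_le' hℓ
  rw [pow_add, mul_assoc, ← mul_assoc (a ^ n), ← pow_succ, ← h]

theorem mul_pow_eq_self {u e : R} (h : u * e = u) (k : ℕ) : u * e ^ k = u := by
  induction k with
  | zero => rw [pow_zero, mul_one]
  | succ k ih => rw [pow_succ, ← mul_assoc, ih, h]

theorem mul_one_sub_one_sub_pow_pow {u e : R} (h : u * e = u) {k : ℕ} (hk : k ≠ 0) :
    u * (1 - (1 - e ^ k) ^ k) = u := by
  have h₁ : u * (1 - e ^ k) = 0 := by rw [mul_sub, mul_one, mul_pow_eq_self h, sub_self]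
  obtain ⟨j, rfl⟩ := Nat.exists_eq_succ_of_ne_zero hk
  rw [mul_sub, mul_one, pow_succ', ← mul_assoc, h₁, zero_mul, sub_zero]

theorem exists_mul_eq_of_isNilpotent_sub {E B w : R} (hE : IsIdempotentElem E) (hB : B * E = B)
    (hnil : IsNilpotent (E - w * B)) : ∃ W, W * B = E := by
  set μ := E - w * B
  have hwB : w * B = E - μ := (sub_sub_cancel E _).symm
  have hμ : μ * E = μ := by rw [sub_mul, hE.eq, mul_assoc, hB]
  have key : ∀ j : ℕ, ∃ W, W * B = E - μ ^ (j + 1) := by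
    intro j
    induction j with
    | zero => exact ⟨w, by rw [zero_add, pow_one, hwB]⟩
    | succ j ih =>
      obtain ⟨W, hW⟩ := ih
      refine ⟨w + μ * W, ?_⟩
      rw [add_mul, mul_assoc, hW, mul_sub, hμ, ← pow_succ', hwB]
      abel
  obtain ⟨k, hk⟩ := hnil
  obtain ⟨W, hW⟩ := key k
  exact ⟨W, by rw [hW, pow_succ, hk, zero_mul, sub_zero]⟩

end Ring

theorem exists_pow_eq_mul_pow_succ_of_pow_eq_pow_succ_mul {R : Type u} [Ring R]
    (hnil : ∀ z : R,
      (∀ (D : Type u) [Ring D] [NoZeroDivisors D] (f : R →+* D), f z = 0) → IsNilpotent z)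
    {a x : R} {n : ℕ} (h : a ^ n = a ^ (n + 1) * x) : ∃ y, a ^ n = y * a ^ (n + 1) := by
  have hzero_or_inv : ∀ (D : Type u) [Ring D] [NoZeroDivisors D] (f : R →+* D),
      f a = 0 ∨ f a * f x = 1 ∧ f x * f a = 1 := fun D _ _ f =>
    eq_zero_or_mul_eq_one_of_pow_eq_pow_succ_mul <| by
      simpa only [map_pow, map_mul] using congrArg f h
  obtain ⟨k, hk⟩ := hnil (a * x - (a * x) ^ 2) fun D _ _ f => by
    rcases hzero_or_inv D f with ha | ⟨hax, -⟩
    · simp [ha]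
    · simp [pow_two, hax]
  set E := 1 - (1 - (a * x) ^ (k + 1)) ^ (k + 1)
  have hE : IsIdempotentElem E :=
    isIdempotentElem_one_sub_one_sub_pow_pow _ _ (pow_eq_zero_of_le k.le_succ hk)
  have haE : ∀ ℓ, n ≤ ℓ → a ^ ℓ * E = a ^ ℓ := fun ℓ hℓ =>
    mul_one_sub_one_sub_pow_pow (pow_mul_mul_eq_of_pow_eq_pow_succ_mul h hℓ) k.succ_ne_zero
  obtain ⟨W, hW⟩ := exists_mul_eq_of_isNilpotent_sub hE (haE _ n.le_succ)
    (hnil (E - x ^ (n + 1) * a ^ (n + 1)) fun D _ _ f => by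
      rcases hzero_or_inv D f with ha | ⟨hax, hxa⟩
      · simp [E, ha]
      · have hcomm : Commute (f x) (f a) := hxa.trans hax.symm
        simp [E, hax, ← hcomm.mul_pow, hxa])
  exact ⟨a ^ n * W, by rw [mul_assoc, hW, haE n le_rfl]⟩

/-- In a strongly 2-primal ring (every prime two-sided ideal is completely
prime), every right strongly π-regular element is strongly π-regular. -/
theorem stmt_6 {R : Type*} [Ring R]
    (h2primal : ∀ P : TwoSidedIdeal R, P ≠ ⊤ →
      (∀ I J : TwoSidedIdeal R, (∀ i ∈ I, ∀ j ∈ J, i * j ∈ P) → I ≤ P ∨ J ≤ P) →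
      ∀ a b : R, a * b ∈ P → a ∈ P ∨ b ∈ P)
    (a : R) (ha : ∃ (n : ℕ) (x : R), 0 < n ∧ a ^ n = a ^ (n + 1) * x) :
    ∃ (n m : ℕ) (x y : R), 0 < n ∧ 0 < m ∧
      a ^ n = a ^ (n + 1) * x ∧ a ^ m = y * a ^ (m + 1) := by
  obtain ⟨n, x, hn, hx⟩ := ha
  obtain ⟨y, hy⟩ := exists_pow_eq_mul_pow_succ_of_pow_eq_pow_succ_mul
    (fun _ => isNilpotent_of_forall_ringHom_eq_zero fun P hP => h2primal P hP.1 hP.2) hx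
  exact ⟨n, n, x, y, hn, hn, hx, hy⟩
end

section
/- Let R be a ring every prime factor ring of which embeds in a matrix ring over a division ring (e.g., R a PI-ring). If a ∈ R satisfies aⁿ = aⁿ⁺¹x for some n ≥ 1 and x ∈ R, then there exists y ∈ R with aⁿ = yaⁿ⁺¹. -/
/-!
Suppose no `y` satisfies `a ^ n = y * a ^ (n + 1)`. By Zorn's lemma some two-sided ideal `M` is
maximal among those containing no `a ^ n - y * a ^ (n + 1)`, and `M` is prime: if `I * J ⊆ M` with
`I, J ⊈ M`, maximality gives such elements `e₁ ∈ M + I`, `e₂ ∈ M + J`, so `e₁ R e₂ ⊆ M`; in `R/M`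
this yields `e₁ a ^ n = e₁ y₂ ^ k a ^ (n + k)`, and multiplying by `x ^ n` turns `e₁` itself into a
left multiple of `a ^ (n + 1)`, i.e. a witness modulo `M`. Hence `R/M` embeds into a matrix ring
`S` over a division ring. `S` is left Artinian, so the chain `S b ^ m` stabilizes and the image `b`
of `a` is left π-regular at some index, hence at index `n`. Then `b ^ n = b ^ n c ^ (n + 1) b ^ (n + 1)`
for the image `c` of `x`, an identity that pulls back to `R/M` and gives a witness modulo `M`.
-/

section PowerIdentities

variable {R : Type*} [Ring R] {a x y : R} {n m : ℕ}

theorem pow_add_mul_pow_eq (hx : a ^ n = a ^ (n + 1) * x) (hm : n ≤ m) (k : ℕ) :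
    a ^ (m + k) * x ^ k = a ^ m := by
  have step : ∀ l, n ≤ l → a ^ l = a ^ (l + 1) * x := by
    intro l hl
    obtain ⟨j, rfl⟩ := Nat.exists_eq_add_of_le' hl
    rw [pow_add, hx, ← mul_assoc, ← pow_add, ← add_assoc]
  induction k with
  | zero => simp
  | succ k ih =>
    rw [pow_succ' x, ← mul_assoc, ← add_assoc, ← step _ (by omega), ih]

theorem pow_eq_mul_pow_succ_of_pow_eq_pow_succ_mul (hx : a ^ n = a ^ (n + 1) * x)
    (hy : a ^ m = y * a ^ (m + 1)) : a ^ n = y * a ^ (n + 1) :=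
  calc a ^ n = a ^ m * a ^ n * x ^ m := by
        rw [← pow_add, add_comm, pow_add_mul_pow_eq hx le_rfl]
    _ = y * (a ^ (n + 1 + m) * x ^ m) := by
        rw [hy, mul_assoc y, ← pow_add, mul_assoc, show m + 1 + n = n + 1 + m by omega]
    _ = y * a ^ (n + 1) := by rw [pow_add_mul_pow_eq hx n.le_succ]

theorem pow_mul_pow_mul_pow_eq_self (hx : a ^ n = a ^ (n + 1) * x)
    (hy : a ^ n = y * a ^ (n + 1)) (k : ℕ) : a ^ n * x ^ k * a ^ k = a ^ n := by
  have hcomm : a ^ n * x = y * a ^ n := by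
    conv_lhs => rw [hy]
    rw [mul_assoc, ← hx]
  induction k with
  | zero => simp
  | succ k ih =>
    calc a ^ n * x ^ (k + 1) * a ^ (k + 1) = y * (a ^ n * x ^ k * a ^ k) * a := by
          rw [pow_succ' x, pow_succ a, ← mul_assoc (a ^ n), hcomm]; noncomm_ring
      _ = a ^ n := by rw [ih, mul_assoc, ← pow_succ, ← hy]

end PowerIdentities

theorem IsArtinianRing.exists_pow_eq_mul_pow_succ {R : Type*} [Ring R] [IsArtinianRing R]
    (a : R) : ∃ m y, a ^ m = y * a ^ (m + 1) := by
  let f : Module.End R R := DistribMulAction.toModuleEnd R R (MulOpposite.op a)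
  have hf : ∀ k r, (f ^ k) r = r * a ^ k := by
    intro k r
    induction k generalizing r with
    | zero => simp
    | succ k ih =>
      rw [pow_succ', Module.End.mul_apply, ih]
      simp [f, pow_succ, mul_assoc]
  obtain ⟨m, hm⟩ := IsArtinian.monotone_stabilizes f.iterateRange
  have hrange : LinearMap.range (f ^ m) = LinearMap.range (f ^ (m + 1)) := hm (m + 1) m.le_succ
  have : a ^ m ∈ LinearMap.range (f ^ (m + 1)) := by
    rw [← hrange]
    exact ⟨1, by rw [hf, one_mul]⟩
  obtain ⟨y, hy⟩ := this
  exact ⟨m, y, by rw [← hy, hf]⟩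

theorem exists_pow_eq_mul_pow_succ_of_injective {R S : Type*} [Ring R] [Ring S] [IsArtinianRing S]
    {f : R →+* S} (hf : Function.Injective f) {a x : R} {n : ℕ}
    (hx : a ^ n = a ^ (n + 1) * x) : ∃ y, a ^ n = y * a ^ (n + 1) := by
  have hfx : f a ^ n = f a ^ (n + 1) * f x := by simpa only [map_pow, map_mul] using congrArg f hx
  obtain ⟨m, z, hz⟩ := IsArtinianRing.exists_pow_eq_mul_pow_succ (f a)
  have hfz := pow_mul_pow_mul_pow_eq_self hfx (pow_eq_mul_pow_succ_of_pow_eq_pow_succ_mul hfx hz)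
    (n + 1)
  -- `z` need not lie in the image of `f`, but the witness `a ^ n * x ^ (n + 1)` does.
  refine ⟨a ^ n * x ^ (n + 1), hf ?_⟩
  simpa only [map_pow, map_mul] using hfz.symm

theorem exists_pow_eq_mul_pow_succ_of_mul_mul_eq_zero {R : Type*} [Ring R] {a x y₁ y₂ : R} {n : ℕ}
    (hx : a ^ n = a ^ (n + 1) * x)
    (h : ∀ r, (a ^ n - y₁ * a ^ (n + 1)) * r * (a ^ n - y₂ * a ^ (n + 1)) = 0) :
    ∃ y, a ^ n = y * a ^ (n + 1) := by
  set e := a ^ n - y₁ * a ^ (n + 1)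
  have hshift : ∀ r, e * r * a ^ n = e * (r * y₂) * a ^ (n + 1) := fun r => by
    have := h r
    rwa [mul_sub, sub_eq_zero, ← mul_assoc, mul_assoc e r y₂] at this
  have hiter : ∀ k, e * a ^ n = e * y₂ ^ k * a ^ (n + k) := by
    intro k
    induction k with
    | zero => simp
    | succ k ih =>
      rw [ih, pow_add, ← mul_assoc, hshift, mul_assoc, ← pow_add, ← pow_succ, add_right_comm,
        add_assoc]
  have he : e = e * a ^ n * x ^ n := by
    simp only [e, sub_mul, mul_assoc, ← pow_add, pow_add_mul_pow_eq hx le_rfl,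
      pow_add_mul_pow_eq hx n.le_succ]
  have he' : e = e * y₂ ^ (n + 1) * a ^ (n + 1) :=
    calc e = e * a ^ n * x ^ n := he
      _ = e * y₂ ^ (n + 1) * (a ^ (n + 1 + n) * x ^ n) := by
          rw [hiter (n + 1), mul_assoc, add_comm n (n + 1)]
      _ = e * y₂ ^ (n + 1) * a ^ (n + 1) := by rw [pow_add_mul_pow_eq hx n.le_succ]
  refine ⟨y₁ + e * y₂ ^ (n + 1), ?_⟩
  calc a ^ n = y₁ * a ^ (n + 1) + e := (add_sub_cancel _ _).symm
    _ = y₁ * a ^ (n + 1) + e * y₂ ^ (n + 1) * a ^ (n + 1) := by rw [← he']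
    _ = (y₁ + e * y₂ ^ (n + 1)) * a ^ (n + 1) := (add_mul _ _ _).symm

namespace TwoSidedIdeal

variable {R : Type*} [Ring R]

theorem exists_mem_of_mem_sSup_of_isChain {c : Set (TwoSidedIdeal R)} (hc : IsChain (· ≤ ·) c)
    (hne : c.Nonempty) {r : R} (hr : r ∈ sSup c) : ∃ I ∈ c, r ∈ I := by
  obtain ⟨I₀, hI₀⟩ := hne
  let U : TwoSidedIdeal R := .mk' (⋃ I ∈ c, (I : Set R)) (Set.mem_biUnion hI₀ I₀.zero_mem)
    (fun {u v} hu hv => by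
      obtain ⟨I, hI, hu⟩ := Set.mem_iUnion₂.1 hu
      obtain ⟨J, hJ, hv⟩ := Set.mem_iUnion₂.1 hv
      obtain ⟨K, hK, hIK, hJK⟩ := hc.directedOn I hI J hJ
      exact Set.mem_biUnion hK (K.add_mem (hIK hu) (hJK hv)))
    (fun hu => by
      obtain ⟨I, hI, hu⟩ := Set.mem_iUnion₂.1 hu
      exact Set.mem_biUnion hI (I.neg_mem hu))
    (fun hu => by
      obtain ⟨I, hI, hu⟩ := Set.mem_iUnion₂.1 hu
      exact Set.mem_biUnion hI (I.mul_mem_left _ _ hu))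
    (fun hu => by
      obtain ⟨I, hI, hu⟩ := Set.mem_iUnion₂.1 hu
      exact Set.mem_biUnion hI (I.mul_mem_right _ _ hu))
  have hU : sSup c ≤ U := sSup_le fun I hI u hu => by
    rw [mem_mk']
    exact Set.mem_biUnion hI hu
  simpa [U] using hU hr

theorem exists_maximal_disjoint {s : Set R} (hs : (0 : R) ∉ s) :
    ∃ M : TwoSidedIdeal R, Maximal (fun I : TwoSidedIdeal R => Disjoint (I : Set R) s) M := by
  have hbot : Disjoint ((⊥ : TwoSidedIdeal R) : Set R) s :=
    Set.disjoint_left.2 fun r hr => by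
      rw [SetLike.mem_coe, mem_bot] at hr
      rwa [hr]
  obtain ⟨M, -, hM⟩ := zorn_le_nonempty₀ {I : TwoSidedIdeal R | Disjoint (I : Set R) s}
    (fun c hcs hc I hI => ⟨sSup c, Set.disjoint_left.2 fun r hr hrs => by
      obtain ⟨J, hJ, hrJ⟩ := exists_mem_of_mem_sSup_of_isChain hc ⟨I, hI⟩ hr
      exact Set.disjoint_left.1 (hcs hJ) hrJ hrs, fun J hJ => le_sSup hJ⟩) ⊥ hbot
  exact ⟨M, hM⟩

theorem mk'_eq_zero_iff_s9 (I : TwoSidedIdeal R) {r : R} : I.ringCon.mk' r = 0 ↔ r ∈ I := by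
  rw [← mem_ker, ker_ringCon_mk']

theorem exists_sub_mul_mem_iff (I : TwoSidedIdeal R) (u v : R) :
    (∃ y, u - y * v ∈ I) ↔ ∃ z, I.ringCon.mk' u = z * I.ringCon.mk' v := by
  simp only [I.ringCon.mk'_surjective.exists, ← mk'_eq_zero_iff_s9, map_sub, map_mul, sub_eq_zero]

theorem mul_mul_mem_of_mem_sup {M I J : TwoSidedIdeal R} (hIJ : ∀ i ∈ I, ∀ j ∈ J, i * j ∈ M)
    {u v : R} (hu : u ∈ M ⊔ I) (hv : v ∈ M ⊔ J) (r : R) : u * r * v ∈ M := by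
  obtain ⟨m₁, hm₁, i, hi, rfl⟩ := mem_sup.1 hu
  obtain ⟨m₂, hm₂, j, hj, rfl⟩ := mem_sup.1 hv
  rw [show (m₁ + i) * r * (m₂ + j) = m₁ * (r * (m₂ + j)) + i * r * m₂ + i * r * j by noncomm_ring]
  exact M.add_mem (M.add_mem (M.mul_mem_right _ _ hm₁) (M.mul_mem_left _ _ hm₂))
    (hIJ _ (I.mul_mem_right _ _ hi) _ hj)

theorem le_or_le_of_maximal_disjoint_range {a x : R} {n : ℕ} (hx : a ^ n = a ^ (n + 1) * x)
    {M : TwoSidedIdeal R}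
    (hM : Maximal (fun I : TwoSidedIdeal R =>
      Disjoint (I : Set R) (Set.range fun y => a ^ n - y * a ^ (n + 1))) M)
    {I J : TwoSidedIdeal R} (hIJ : ∀ i ∈ I, ∀ j ∈ J, i * j ∈ M) : I ≤ M ∨ J ≤ M := by
  have hwitness : ∀ K : TwoSidedIdeal R, ¬K ≤ M → ∃ y, a ^ n - y * a ^ (n + 1) ∈ M ⊔ K := by
    intro K hK
    by_contra! hK'
    refine hK (le_sup_right.trans (hM.2 ?_ le_sup_left))
    exact Set.disjoint_right.2 (Set.forall_mem_range.2 hK')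
  by_contra! hIJ'
  obtain ⟨y₁, h₁⟩ := hwitness I hIJ'.1
  obtain ⟨y₂, h₂⟩ := hwitness J hIJ'.2
  have hzero : ∀ r : M.ringCon.Quotient, (M.ringCon.mk' (a ^ n - y₁ * a ^ (n + 1))) * r *
      M.ringCon.mk' (a ^ n - y₂ * a ^ (n + 1)) = 0 := by
    intro r
    obtain ⟨r, rfl⟩ := M.ringCon.mk'_surjective r
    rw [← map_mul, ← map_mul, mk'_eq_zero_iff_s9]
    exact mul_mul_mem_of_mem_sup hIJ h₁ h₂ r
  simp only [map_sub, map_mul, map_pow] at hzero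
  obtain ⟨y, hy⟩ := (M.exists_sub_mul_mem_iff (a ^ n) (a ^ (n + 1))).2 <| by
    simpa only [map_pow] using exists_pow_eq_mul_pow_succ_of_mul_mul_eq_zero
      (by simpa only [map_pow, map_mul] using congrArg M.ringCon.mk' hx) hzero
  exact Set.disjoint_right.1 hM.1 ⟨y, rfl⟩ hy

end TwoSidedIdeal

theorem stmt_9_general {R : Type u} [Ring R]
    (h : ∀ P : TwoSidedIdeal R, P ≠ ⊤ →
      (∀ I J : TwoSidedIdeal R, (∀ i ∈ I, ∀ j ∈ J, i * j ∈ P) → I ≤ P ∨ J ≤ P) →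
      ∃ (k : ℕ) (D : Type u) (_ : DivisionRing D)
        (f : P.ringCon.Quotient →+* Matrix (Fin k) (Fin k) D),
        Function.Injective f)
    (a x : R) (n : ℕ) (ha : a ^ n = a ^ (n + 1) * x) :
    ∃ y : R, a ^ n = y * a ^ (n + 1) := by
  by_contra! hcon
  obtain ⟨M, hM⟩ := TwoSidedIdeal.exists_maximal_disjoint
    (s := Set.range fun y => a ^ n - y * a ^ (n + 1))
    (by rintro ⟨y, hy⟩; exact hcon y (sub_eq_zero.1 hy))
  have hMtop : M ≠ ⊤ := by
    rintro rfl
    exact Set.disjoint_right.1 hM.1 ⟨0, rfl⟩ (TwoSidedIdeal.mem_top R)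
  obtain ⟨k, D, _, f, hf⟩ := h M hMtop fun I J =>
    TwoSidedIdeal.le_or_le_of_maximal_disjoint_range ha hM
  obtain ⟨y, hy⟩ := (M.exists_sub_mul_mem_iff (a ^ n) (a ^ (n + 1))).2 <| by
    simpa only [map_pow] using exists_pow_eq_mul_pow_succ_of_injective hf
      (by simpa only [map_pow, map_mul] using congrArg M.ringCon.mk' ha)
  exact Set.disjoint_right.1 hM.1 ⟨y, rfl⟩ hy

/-- If every prime factor ring of `R` embeds in a matrix ring over a division
ring (e.g. `R` a PI-ring, by Posner's theorem), then every right strongly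
π-regular element of `R` is (left, hence) strongly π-regular. -/
theorem stmt_9 {R : Type u} [Ring R]
    (h : ∀ P : TwoSidedIdeal R, P ≠ ⊤ →
      (∀ I J : TwoSidedIdeal R, (∀ i ∈ I, ∀ j ∈ J, i * j ∈ P) → I ≤ P ∨ J ≤ P) →
      ∃ (k : ℕ) (D : Type u) (_ : DivisionRing D)
        (f : P.ringCon.Quotient →+* Matrix (Fin k) (Fin k) D),
        Function.Injective f)
    (a x : R) (n : ℕ) (hn : 0 < n) (ha : a ^ n = a ^ (n + 1) * x) :
    ∃ y : R, a ^ n = y * a ^ (n + 1) :=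
  stmt_9_general h a x n ha
end

section
/- Let S be a commutative ring and A, B ∈ Mₘ(S) with Aⁿ = Aⁿ⁺¹B. Then A^{nm} = A^{nm+1}·g(A) for some polynomial g with coefficients in Mₘ(S); in particular A is strongly π-regular in Mₘ(S). -/
/-!
Iterating `a ^ n = a ^ (n + 1) * b` gives `a ^ (n + i) * b ^ i = a ^ n`, so multiplying a monic
relation `p(b) = 0` of degree `d` on the left by `a ^ (n + d)` turns it into
`a ^ n * p.reverse(a) = 0`. The reverse of a monic polynomial has constant term `1`, so this says
`a ^ n = a ^ (n + 1) * w` with `w` a polynomial in `a`, which therefore commutes with `a`.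
For a matrix `B`, Cayley–Hamilton provides the monic relation.
-/

open Polynomial

section Monoid

variable {M : Type*} [Monoid M] {a b : M} {n : ℕ}

theorem pow_add_mul_pow_of_pow_eq_pow_succ_mul (h : a ^ n = a ^ (n + 1) * b) (k : ℕ) :
    a ^ (n + k) * b ^ k = a ^ n := by
  induction k with
  | zero => simp
  | succ k ih =>
    calc a ^ (n + (k + 1)) * b ^ (k + 1) = a * (a ^ (n + k) * b ^ k) * b := by
          rw [← add_assoc, pow_succ', pow_succ, mul_assoc, mul_assoc, mul_assoc]
      _ = a ^ n := by rw [ih, ← pow_succ', ← h]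

theorem pow_eq_pow_succ_mul_of_le_s12 {w : M} (h : a ^ n = a ^ (n + 1) * w) {k : ℕ} (hk : n ≤ k) :
    a ^ k = a ^ (k + 1) * w := by
  rw [← Nat.sub_add_cancel hk, pow_add, h, ← mul_assoc, ← pow_add, add_assoc]

end Monoid

section Algebra

variable {S R : Type*} [CommSemiring S] [Semiring R] [Algebra S R]

theorem Polynomial.commute_aeval_self (a : R) (p : S[X]) : Commute (aeval a p) a :=
  (commute_iff_eq _ _).2 <| by simpa using congrArg (aeval a) (mul_comm p X)

end Algebra

section Ring

variable {S R : Type*} [CommRing S] [Ring R] [Algebra S R] {a b : R} {n : ℕ}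

theorem pow_add_mul_aeval_eq_pow_mul_aeval_reflect (h : a ^ n = a ^ (n + 1) * b) {d : ℕ}
    (p : S[X]) (hp : p.natDegree ≤ d) :
    a ^ (n + d) * aeval b p = a ^ n * aeval a (reflect d p) := by
  refine induction_with_natDegree_le
    (fun p ↦ a ^ (n + d) * aeval b p = a ^ n * aeval a (reflect d p)) d (by simp) ?_ ?_ p hp
  · intro i c _ hi
    have : a ^ (n + d) * b ^ i = a ^ n * a ^ (d - i) := by
      rw [show n + d = d - i + (n + i) by omega, pow_add, mul_assoc,
        pow_add_mul_pow_of_pow_eq_pow_succ_mul h, ← pow_add, ← pow_add, add_comm]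
    simp [revAt_le hi, ← Algebra.smul_def, this]
  · intro p q _ _ hp hq
    simp [reflect_add, mul_add, hp, hq]

theorem exists_pow_eq_pow_succ_mul_aeval (h : a ^ n = a ^ (n + 1) * b) {p : S[X]}
    (hmonic : p.Monic) (hb : aeval b p = 0) :
    ∃ q : S[X], a ^ n = a ^ (n + 1) * aeval a q := by
  refine ⟨-(reverse p).divX, ?_⟩
  have hrev : a ^ n * aeval a (reverse p) = 0 := by
    rw [reverse, ← pow_add_mul_aeval_eq_pow_mul_aeval_reflect h p le_rfl, hb, mul_zero]
  rw [← X_mul_divX_add (reverse p), coeff_zero_reverse, hmonic.leadingCoeff] at hrev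
  simp only [map_add, map_mul, aeval_X, map_one, mul_add, mul_one, ← mul_assoc,
    ← pow_succ] at hrev
  rw [map_neg, mul_neg, eq_neg_iff_add_eq_zero, add_comm, hrev]

end Ring

theorem stmt_12_general {S : Type*} [CommRing S] {m : ℕ}
    (A B : Matrix (Fin m) (Fin m) S) (n : ℕ)
    (h : A ^ n = A ^ (n + 1) * B) :
    (∃ g : Polynomial (Matrix (Fin m) (Fin m) S),
      A ^ (n * m) = A ^ (n * m + 1) * g.eval A) ∧
    ∃ (k : ℕ) (X Y : Matrix (Fin m) (Fin m) S), 0 < k ∧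
      A ^ k = A ^ (k + 1) * X ∧ A ^ k = Y * A ^ (k + 1) := by
  obtain ⟨q, hq⟩ :=
    exists_pow_eq_pow_succ_mul_aeval h B.charpoly_monic B.aeval_self_charpoly
  have hsucc := pow_eq_pow_succ_mul_of_le_s12 hq n.le_succ
  refine ⟨⟨C (aeval A q), ?_⟩, n + 1, aeval A q, aeval A q, n.succ_pos, hsucc,
    hsucc.trans ((commute_aeval_self A q).pow_right _).eq.symm⟩
  rcases Nat.eq_zero_or_pos m with rfl | hm
  · exact Subsingleton.elim _ _
  · rw [eval_C]
    exact pow_eq_pow_succ_mul_of_le_s12 hq (Nat.le_mul_of_pos_right n hm)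

/-- If `A^n = A^(n+1) * B` over a commutative ring `S` (matrices of size `m`),
then `A^(n*m) = A^(n*m+1) * g(A)` for some polynomial `g` with matrix
coefficients; in particular `A` is strongly π-regular in `Mₘ(S)`. -/
theorem stmt_12 {S : Type*} [CommRing S] {m : ℕ}
    (A B : Matrix (Fin m) (Fin m) S) (n : ℕ) (hn : 0 < n)
    (h : A ^ n = A ^ (n + 1) * B) :
    (∃ g : Polynomial (Matrix (Fin m) (Fin m) S),
      A ^ (n * m) = A ^ (n * m + 1) * g.eval A) ∧
    ∃ (k : ℕ) (X Y : Matrix (Fin m) (Fin m) S), 0 < k ∧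
      A ^ k = A ^ (k + 1) * X ∧ A ^ k = Y * A ^ (k + 1) :=
  stmt_12_general A B n h
end

section
/- Let S ⊆ T be rings (S a subring of T, not necessarily unital in T) and a ∈ S with aⁿ = aⁿ⁺¹x for some n ≥ 1 and x ∈ S. If T is a Dedekind-finite exchange ring, then a is strongly π-regular in S. -/
/-!
Put `b = aⁿ` and `y = xⁿ`, so that `b = b² y` and `t = b y` satisfies `b t = b`. An idempotent
`e ∈ tT` with `1 - e ∈ (1 - t)T` given by the exchange property satisfies `b e = b` and
`e ∈ bT`, so `1 - e + b` has a right inverse `1 - e + c` with `c ∈ eTe`. Dedekind-finiteness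
makes it two-sided, which forces `e = b y`, `c = b y²` and `b = (b y²) b²`. Every factor lies
in `S`, so `aⁿ = (aⁿ x²ⁿ aⁿ⁻¹) aⁿ⁺¹`.
-/

theorem pow_eq_pow_add_mul_pow {M : Type*} [Monoid M] {a x : M} {n : ℕ}
    (h : a ^ n = a ^ (n + 1) * x) (m : ℕ) : a ^ n = a ^ (n + m) * x ^ m := by
  induction m with
  | zero => simp
  | succ m ih =>
    calc a ^ n = a ^ m * (a ^ (n + 1) * x) * x ^ m := by
          rw [← h, ← pow_add, add_comm, ih]
      _ = a ^ (n + (m + 1)) * x ^ (m + 1) := by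
          rw [mul_assoc, mul_assoc, ← pow_succ', ← mul_assoc, ← pow_add,
            show m + (n + 1) = n + (m + 1) by omega]

theorem IsIdempotentElem.corner_left_inverse {R : Type*} [Ring R] [IsDedekindFiniteMonoid R]
    {b d e : R} (he : IsIdempotentElem e) (hbe : b * e = b) (hbd : b * d = e) :
    e * d * e * b = e ∧ e * b = b := by
  set c := e * d * e
  have hbc : b * c = e := by simp only [c, ← mul_assoc, hbe, hbd, he.eq]
  have hec : e * c = c := by simp only [c, ← mul_assoc, he.eq]
  have hce : c * e = c := by simp only [c, mul_assoc, he.eq]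
  have hone : (1 - e + b) * (1 - e + c) = 1 := by
    simp only [add_mul, sub_mul, mul_add, mul_sub, one_mul, mul_one, he.eq, hbe, hbc, hec]
    abel
  have hone_symm := mul_eq_one_symm hone
  constructor
  · calc c * b = e * ((1 - e + c) * (1 - e + b)) := by
          simp only [add_mul, sub_mul, mul_add, mul_sub, one_mul, mul_one, ← mul_assoc,
            he.eq, hec, hce]
          abel
      _ = e := by rw [hone_symm, mul_one]
  · calc e * b = b - (1 - e) * ((1 - e + c) * (1 - e + b)) + (1 - e) := by
          simp only [add_mul, sub_mul, mul_add, mul_sub, one_mul, mul_one, ← mul_assoc,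
            he.eq, hec, hce]
          abel
      _ = b := by rw [hone_symm, mul_one, sub_add_cancel]

theorem mul_pow_mem {M A : Type*} [Monoid M] [SetLike A M] [MulMemClass A M] {S : A}
    {b a : M} (hb : b ∈ S) (ha : a ∈ S) (m : ℕ) : b * a ^ m ∈ S := by
  induction m with
  | zero => simpa using hb
  | succ m ih => simpa only [pow_succ, ← mul_assoc] using mul_mem ih ha

theorem eq_mul_sq_mul_sq_of_eq_sq_mul {R : Type*} [Ring R] [IsDedekindFiniteMonoid R]
    (hex : ∀ t : R, ∃ e : R, IsIdempotentElem e ∧ (∃ r : R, e = t * r) ∧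
      ∃ s : R, 1 - e = (1 - t) * s)
    {b y : R} (h : b = b ^ 2 * y) : b = b * y ^ 2 * b ^ 2 := by
  obtain ⟨e, he, ⟨r, her⟩, s, hes⟩ := hex (b * y)
  have hbt : b * (b * y) = b := by rw [← mul_assoc, ← sq, ← h]
  have hbe : b * e = b := by
    rw [← sub_eq_zero, ← neg_sub, ← mul_one_sub, hes, ← mul_assoc, mul_one_sub, hbt, sub_self,
      zero_mul, neg_zero]
  obtain ⟨hcb, heb⟩ := he.corner_left_inverse hbe (show b * (y * r) = e by rw [her, mul_assoc])
  set c := e * (y * r) * e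
  have het : e = b * y :=
    calc e = c * (b * (b * y)) := by rw [hbt, hcb]
      _ = b * y := by rw [← mul_assoc, hcb, ← mul_assoc, heb]
  have hc : c = b * y ^ 2 :=
    calc c = c * e := by simp only [c, mul_assoc, he.eq]
      _ = b * y ^ 2 := by rw [het, ← mul_assoc, hcb, het, mul_assoc, sq]
  calc b = c * b * b := by rw [hcb, heb]
    _ = b * y ^ 2 * b ^ 2 := by rw [hc, mul_assoc _ b, sq b]

/-- If `S` is a (not necessarily unital) subring of a Dedekind-finite exchange
ring `T` and `a ∈ S` satisfies `a^n = a^(n+1) * x` with `x ∈ S`, then `a` is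
strongly π-regular in `S`. -/
theorem stmt_19 {T : Type*} [Ring T] (S : NonUnitalSubring T)
    (hdf : ∀ a b : T, a * b = 1 → b * a = 1)
    (hex : ∀ t : T, ∃ e : T, IsIdempotentElem e ∧ (∃ r : T, e = t * r) ∧
      ∃ s : T, 1 - e = (1 - t) * s)
    (a x : T) (ha : a ∈ S) (hx : x ∈ S) (n : ℕ) (hn : 0 < n)
    (h : a ^ n = a ^ (n + 1) * x) :
    ∃ (k : ℕ) (u v : T), 0 < k ∧ u ∈ S ∧ v ∈ S ∧
      a ^ k = a ^ (k + 1) * u ∧ a ^ k = v * a ^ (k + 1) := by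
  have : IsDedekindFiniteMonoid T := ⟨hdf _ _⟩
  have hpow_mem : ∀ {z : T}, z ∈ S → z ^ n ∈ S := fun hz ↦ by
    simpa only [mul_pow_sub_one hn.ne'] using mul_pow_mem hz hz (n - 1)
  have hsq : a ^ n = (a ^ n) ^ 2 * x ^ n := by
    rw [← pow_mul, mul_two]
    exact pow_eq_pow_add_mul_pow h n
  refine ⟨n, x, a ^ n * (x ^ n) ^ 2 * a ^ (n - 1), hn, hx, ?_, h, ?_⟩
  · rw [sq]
    exact mul_pow_mem (mul_mem (hpow_mem ha) (mul_mem (hpow_mem hx) (hpow_mem hx))) ha (n - 1)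
  · calc a ^ n = a ^ n * (x ^ n) ^ 2 * (a ^ n) ^ 2 := eq_mul_sq_mul_sq_of_eq_sq_mul hex hsq
      _ = a ^ n * (x ^ n) ^ 2 * a ^ (n - 1) * a ^ (n + 1) := by
        rw [mul_assoc _ (a ^ (n - 1)), ← pow_add, ← pow_mul a, show n - 1 + (n + 1) = n * 2 by omega]
end
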